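/- Let G be an internally 4-edge-connected graph with no K_{3,3} immersion, containing exactly two parallel edges between vertices u and v, both of degree four. Then the graph G' obtained from G by pinching this double edge (removing both edges, adding a new vertex w with double edges wu and wv) is internally 4-edge-connected and contains no immersion of K_{3,3}. -/

import Mathlib

/-- A finite multigraph without loops: vertices `V`, edges `E`,
each edge has an unordered pair of distinct endpoints. -/
structure Multigraph where
  V : Type
  E : Type
  [fV : Fintype V]
  [fE : Fintype E]
  [dV : DecidableEq V]
  [dE : DecidableEq E]
  ends : E → Sym2 V
  noLoop : ∀ e, ¬ (ends e).IsDiag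

attribute [instance] Multigraph.fV Multigraph.fE Multigraph.dV Multigraph.dE

namespace Multigraph

/-- Walks in a multigraph. -/
inductive Walk (G : Multigraph) : G.V → G.V → Type
  | nil (v : G.V) : Walk G v v
  | cons {u v w : G.V} (e : G.E) (h : G.ends e = s(u, v)) (p : Walk G v w) : Walk G u w

/-- The list of edges traversed by a walk. -/
def Walk.edges {G : Multigraph} : {u v : G.V} → G.Walk u v → List G.E
  | _, _, .nil _ => []
  | _, _, .cons e _ p => e :: p.edges

/-- The list of vertices visited by a walk. -/
def Walk.support {G : Multigraph} : {u v : G.V} → G.Walk u v → List G.V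
  | u, _, .nil _ => [u]
  | u, _, .cons _ _ p => u :: p.support

/-- A walk is a path if it visits no vertex twice. -/
def Walk.IsPath {G : Multigraph} {u v : G.V} (p : G.Walk u v) : Prop := p.support.Nodup

/-- Data of an immersion of `H` into `G`: an injective map on vertices and,
for each edge of `H`, a path in `G` joining the images of its endpoints,
the paths being pairwise edge-disjoint. -/
structure ImmersionData (H G : Multigraph) where
  vmap : H.V → G.V
  inj : Function.Injective vmap
  pstart : H.E → G.V
  pend : H.E → G.V
  walk : ∀ e, G.Walk (pstart e) (pend e)
  ends_eq : ∀ e, s(pstart e, pend e) = (H.ends e).map vmap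
  isPath : ∀ e, (walk e).IsPath
  edgeDisj : ∀ e e', e ≠ e' → List.Disjoint (walk e).edges (walk e').edges

/-- `H` immerses in `G`. -/
def Immerses (H G : Multigraph) : Prop := Nonempty (ImmersionData H G)

/-- Data witnessing that `G` contains a subdivision of `H` as a subgraph
(i.e. `H` is a topological minor of `G`): as an immersion, but moreover the
paths may only meet at images of common endpoints. -/
structure SubdivisionData (H G : Multigraph) extends ImmersionData H G where
  vtxDisj : ∀ e e', e ≠ e' → ∀ x, x ∈ (walk e).support → x ∈ (walk e').support →
    ∃ w, x = vmap w ∧ w ∈ H.ends e ∧ w ∈ H.ends e'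

/-- `G` contains a subdivision of `H` as a subgraph. -/
def ContainsSubdivision (H G : Multigraph) : Prop := Nonempty (SubdivisionData H G)

/-- The complete bipartite graph `K_{3,3}`. -/
def K33 : Multigraph where
  V := Fin 3 ⊕ Fin 3
  E := Fin 3 × Fin 3
  ends e := s(Sum.inl e.1, Sum.inr e.2)
  noLoop e := by simp [Sym2.mk_isDiag_iff]

/-- The complete graph `K_5`. -/
def K5 : Multigraph where
  V := Fin 5
  E := {p : Fin 5 × Fin 5 // p.1 < p.2}
  ends e := s(e.1.1, e.1.2)
  noLoop e := by simpa [Sym2.mk_isDiag_iff] using e.2.ne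

variable (G : Multigraph)

/-- The degree of a vertex: the number of incident edges. -/
def deg (v : G.V) : ℕ := (Finset.univ.filter fun e => v ∈ G.ends e).card

/-- The multiplicity of the (possible) edge between `u` and `v`. -/
def mult (u v : G.V) : ℕ := (Finset.univ.filter fun e => G.ends e = s(u, v)).card

/-- The edge cut determined by a set `A` of vertices. -/
def cut (A : Finset G.V) : Finset G.E :=
  Finset.univ.filter fun e => ∃ u ∈ A, ∃ v ∈ Aᶜ, G.ends e = s(u, v)

/-- Every edge cut of `G` has at least `k` edges. -/
def EdgeConnGe (k : ℕ) : Prop :=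
  ∀ A : Finset G.V, A.Nonempty → A ≠ Finset.univ → k ≤ (G.cut A).card

/-- Internally 4-edge-connected: 3-edge-connected and every 3-edge cut has a
side consisting of a single vertex. -/
def Internally4EC : Prop :=
  G.EdgeConnGe 3 ∧ ∀ A : Finset G.V, A.Nonempty → A ≠ Finset.univ →
    (G.cut A).card = 3 → A.card = 1 ∨ Aᶜ.card = 1

/-- Weakly 5-edge-connected: internally 4-edge-connected and every 4-edge cut
has a side with at most two vertices. -/
def Weakly5EC : Prop :=
  G.Internally4EC ∧ ∀ A : Finset G.V, A.Nonempty → A ≠ Finset.univ →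
    (G.cut A).card = 4 → A.card ≤ 2 ∨ Aᶜ.card ≤ 2

/-- `G` is `d`-regular. -/
def IsRegular (d : ℕ) : Prop := ∀ v, G.deg v = d

/-- `G` is connected. -/
def Connected : Prop := ∀ u v : G.V, Nonempty (G.Walk u v)

/-- `v` is a cut-vertex: the remaining vertices split into two nonempty parts
with no edge between them. -/
def IsCutVertex (v : G.V) : Prop :=
  ∃ C D : Finset G.V, C.Nonempty ∧ D.Nonempty ∧ Disjoint C D ∧ v ∉ C ∧ v ∉ D ∧
    (∀ x : G.V, x ∈ C ∪ D ∨ x = v) ∧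
    ∀ e : G.E, ¬ ∃ u ∈ C, ∃ w ∈ D, G.ends e = s(u, w)

/-- `G` is 2-connected. -/
def TwoConnected : Prop :=
  G.Connected ∧ 3 ≤ Fintype.card G.V ∧ ∀ v, ¬ G.IsCutVertex v

/-- Planarity, via Kuratowski's characterization: no subdivision of `K_5`
nor of `K_{3,3}` as a subgraph. -/
def Planar : Prop := ¬ ContainsSubdivision K5 G ∧ ¬ ContainsSubdivision K33 G

end Multigraph

lemma Sym2.isDiag_map_iff' {α β : Type*} {f : α → β} (hf : Function.Injective f)
    (s : Sym2 α) : (s.map f).IsDiag ↔ s.IsDiag := by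
  induction s using Sym2.ind with
  | _ x y => simp [Sym2.mk_isDiag_iff, hf.eq_iff]

namespace Multigraph

/-- Pinching the double edge between `u` and `v`: remove all edges between `u`
and `v`, add a new vertex `w`, and join `w` to each of `u` and `v` by a double
edge. -/
def pinch (G : Multigraph) (u v : G.V) : Multigraph where
  V := G.V ⊕ Unit
  E := {e : G.E // G.ends e ≠ s(u, v)} ⊕ (Fin 2 ⊕ Fin 2)
  ends e := match e with
    | .inl e => (G.ends e.1).map Sum.inl
    | .inr (.inl _) => s(Sum.inl u, Sum.inr ())
    | .inr (.inr _) => s(Sum.inl v, Sum.inr ())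
  noLoop e := match e with
    | .inl e => fun hd => G.noLoop e.1 ((Sym2.isDiag_map_iff' Sum.inl_injective _).mp hd)
    | .inr (.inl _) => by simp [Sym2.mk_isDiag_iff]
    | .inr (.inr _) => by simp [Sym2.mk_isDiag_iff]

end Multigraph

/-!
Cuts of the pinched graph containing the new vertex `w` correspond to cuts of `G`: putting `w` on
a side only trades the double edge `uv` for the double edges `wu` and `wv`, and as `u` and `v`
have degree four, no new cut of order at most three appears.

For immersions of a cubic simple graph: if `w` is not a branch vertex, a path through `w` passes
`u, w, v` (or returns to where it came from), and distinct such paths can be rerouted along the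
two distinct `uv` edges. If `w` is the image of a branch vertex `b`, two of the three paths at `b`
leave `w` towards the same `z ∈ {u, v}`. Having degree four, `z` is not a branch vertex, and `b`
can be moved to `z`: those two paths drop their first edge, and the third path is extended by one
of the freed edges `zw`.
-/

lemma Sym2.inr_notMem_map_inl {α β : Type*} (s : Sym2 α) (b : β) :
    (Sum.inr b : α ⊕ β) ∉ s.map Sum.inl := fun h => by
  obtain ⟨_, -, h⟩ := Sym2.mem_map.mp h
  exact nomatch h

lemma Sym2.exists_eq_inl_of_map_inl_eq {α β : Type*} {s : Sym2 α} {a : α} {c : α ⊕ β}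
    (h : s.map Sum.inl = s(.inl a, c)) : ∃ c', c = .inl c' ∧ s = s(a, c') := by
  induction s using Sym2.ind with
  | _ x y =>
    rw [Sym2.map_mk, Sym2.eq_iff] at h
    rcases h with ⟨h1, rfl⟩ | ⟨rfl, h1⟩
    · exact ⟨y, rfl, by rw [Sum.inl_injective h1]⟩
    · exact ⟨x, rfl, by rw [Sum.inl_injective h1, Sym2.eq_swap]⟩

lemma Finset.exists_eq_of_card_eq_three {α β : Type*} [DecidableEq α] {s : Finset α}
    {t : Finset β} (hs : s.card = 3) (ht : t.card ≤ 2) {f : α → β} (hf : Set.MapsTo f s t) :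
    ∃ m ∈ s, ∃ k ∈ s, ∃ l ∈ s, k ≠ l ∧ f k = f l ∧ ∀ e ∈ s, e ≠ m → f e = f k := by
  obtain ⟨k, hk, l, hl, hkl, hfkl⟩ := Finset.exists_ne_map_eq_of_card_lt_of_maps_to (by omega) hf
  have hcard : ((s.erase k).erase l).card = 1 := by
    rw [Finset.card_erase_of_mem (Finset.mem_erase.mpr ⟨hkl.symm, hl⟩),
      Finset.card_erase_of_mem hk, hs]
  obtain ⟨m, hm⟩ := Finset.card_eq_one.mp hcard
  have hms : m ∈ s :=
    Finset.mem_of_mem_erase (Finset.mem_of_mem_erase (hm ▸ Finset.mem_singleton_self m))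
  refine ⟨m, hms, k, hk, l, hl, hkl, hfkl, fun e he hem => ?_⟩
  by_cases hek : e = k
  · rw [hek]
  by_cases hel : e = l
  · rw [hel, hfkl]
  exact absurd (Finset.mem_singleton.mp (hm ▸ by simp [hek, hel, he])) hem

lemma Function.Injective.update_of_forall_ne {α β : Type*} [DecidableEq α] {f : α → β}
    (hf : Function.Injective f) (a : α) {b : β} (hb : ∀ x, f x ≠ b) :
    Function.Injective (Function.update f a b) := by
  intro x x' h
  by_cases hx : x = a <;> by_cases hx' : x' = a
  · rw [hx, hx']
  · rw [hx, Function.update_self, Function.update_of_ne hx'] at h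
    exact absurd h.symm (hb x')
  · rw [hx', Function.update_self, Function.update_of_ne hx] at h
    exact absurd h (hb x)
  · rw [Function.update_of_ne hx, Function.update_of_ne hx'] at h
    exact hf h

namespace Multigraph

variable {H G : Multigraph} {u v : G.V}

lemma ne_of_ends_eq (G : Multigraph) {e : G.E} {a b : G.V} (h : G.ends e = s(a, b)) : a ≠ b :=
  fun hab => G.noLoop e (by rw [h, hab]; exact Sym2.mk_isDiag_iff.mpr rfl)

/-! ### Walks -/

namespace Walk

def append : ∀ {a b c : G.V}, G.Walk a b → G.Walk b c → G.Walk a c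
  | _, _, _, .nil _, q => q
  | _, _, _, .cons e h p, q => .cons e h (p.append q)

def reverse : ∀ {a b : G.V}, G.Walk a b → G.Walk b a
  | _, _, .nil a => .nil a
  | _, _, .cons e h p => p.reverse.append (.cons e (h.trans Sym2.eq_swap) (.nil _))

@[simp] lemma edges_nil (a : G.V) : (Walk.nil a : G.Walk a a).edges = [] := rfl

@[simp] lemma edges_cons {a b c : G.V} (e : G.E) (h : G.ends e = s(a, b)) (p : G.Walk b c) :
    (Walk.cons e h p).edges = e :: p.edges := rfl

@[simp] lemma support_nil (a : G.V) : (Walk.nil a : G.Walk a a).support = [a] := rfl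

@[simp] lemma support_cons {a b c : G.V} (e : G.E) (h : G.ends e = s(a, b)) (p : G.Walk b c) :
    (Walk.cons e h p).support = a :: p.support := rfl

@[simp] lemma edges_append {a b c : G.V} (p : G.Walk a b) (q : G.Walk b c) :
    (p.append q).edges = p.edges ++ q.edges := by
  induction p with
  | nil => rfl
  | cons e h p ih => simp [append, ih]

@[simp] lemma mem_edges_reverse {a b : G.V} (p : G.Walk a b) {e : G.E} :
    e ∈ p.reverse.edges ↔ e ∈ p.edges := by
  induction p with
  | nil => rfl
  | cons e' h p ih => simp [reverse, ih, or_comm]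

lemma start_mem_support {a b : G.V} (p : G.Walk a b) : a ∈ p.support := by
  cases p <;> simp

lemma mem_support_of_mem_edges {a b x : G.V} {p : G.Walk a b} {e : G.E} (he : e ∈ p.edges)
    (hx : x ∈ G.ends e) : x ∈ p.support := by
  induction p with
  | nil => simp at he
  | cons e' h p ih =>
    rcases List.mem_cons.mp he with rfl | he
    · rw [h, Sym2.mem_iff] at hx
      rcases hx with rfl | rfl
      · simp
      · simp [p.start_mem_support]
    · simp [ih he]

lemma exists_isPath_from {a b : G.V} (p : G.Walk a b) {x : G.V} (hx : x ∈ p.support) :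
    ∃ q : G.Walk x b, q.IsPath ∧ q.support ⊆ p.support ∧ q.edges ⊆ p.edges := by
  induction p generalizing x with
  | nil a =>
    obtain rfl : x = a := by simpa using hx
    exact ⟨.nil x, List.nodup_singleton x, List.Subset.refl _, List.Subset.refl _⟩
  | @cons a c b e h p ih =>
    by_cases hxp : x ∈ p.support
    · obtain ⟨q, hq, hqs, hqe⟩ := ih hxp
      exact ⟨q, hq, List.Subset.trans hqs (by simp), List.Subset.trans hqe (by simp)⟩
    · obtain rfl : x = a := by simpa [hxp] using hx
      obtain ⟨q, hq, hqs, hqe⟩ := ih p.start_mem_support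
      refine ⟨.cons e h q, List.nodup_cons.mpr ⟨fun hxq => hxp (hqs hxq), hq⟩, ?_, ?_⟩
      · exact List.cons_subset_cons _ hqs
      · exact List.cons_subset_cons _ hqe

lemma exists_isPath {a b : G.V} (p : G.Walk a b) :
    ∃ q : G.Walk a b, q.IsPath ∧ q.edges ⊆ p.edges :=
  let ⟨q, hq, _, hqe⟩ := p.exists_isPath_from p.start_mem_support
  ⟨q, hq, hqe⟩

lemma exists_walk_of_eq {a b a' b' : G.V} (p : G.Walk a b) (ha : a = a') (hb : b = b') :
    ∃ q : G.Walk a' b', q.edges = p.edges := by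
  subst ha hb
  exact ⟨p, rfl⟩

lemma IsPath.notMem_edges_of_cons {a b c : G.V} {e : G.E} {h : G.ends e = s(a, b)}
    {p : G.Walk b c} (hp : (Walk.cons e h p).IsPath) : e ∉ p.edges := fun he =>
  (List.nodup_cons.mp hp).1 (mem_support_of_mem_edges he (by rw [h]; exact Sym2.mem_mk_left _ _))

def edgesAt {a b : G.V} (p : G.Walk a b) (z : G.V) : Finset G.E :=
  p.edges.toFinset.filter (z ∈ G.ends ·)

lemma edgesAt_mono {a b a' b' : G.V} {p : G.Walk a b} {q : G.Walk a' b'}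
    (h : p.edges ⊆ q.edges) (z : G.V) : p.edgesAt z ⊆ q.edgesAt z := fun e he => by
  simp only [edgesAt, Finset.mem_filter, List.mem_toFinset] at he ⊢
  exact ⟨h he.1, he.2⟩

lemma one_le_card_edgesAt_start {a b : G.V} (p : G.Walk a b) (hab : a ≠ b) :
    1 ≤ (p.edgesAt a).card := by
  cases p with
  | nil => exact absurd rfl hab
  | cons e h p =>
    exact Finset.card_pos.mpr ⟨e, by simp [edgesAt, h]⟩

lemma two_le_card_edgesAt {a b z : G.V} {p : G.Walk a b} (hp : p.IsPath) (hz : z ∈ p.support)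
    (ha : z ≠ a) (hb : z ≠ b) : 2 ≤ (p.edgesAt z).card := by
  induction p with
  | nil => simp_all
  | @cons a c b e h p ih =>
    have hzp : z ∈ p.support := by simpa [ha] using hz
    have hsub : p.edgesAt z ⊆ (Walk.cons e h p).edgesAt z :=
      edgesAt_mono (List.subset_cons_self _ _) z
    by_cases hzc : z = c
    · subst hzc
      have he : e ∈ (Walk.cons e h p).edgesAt z := by simp [edgesAt, h]
      have hep : e ∉ p.edgesAt z := by simp [edgesAt, hp.notMem_edges_of_cons]
      calc 2 ≤ (p.edgesAt z).card + 1 := by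
            have := p.one_le_card_edgesAt_start hb
            omega
        _ = (insert e (p.edgesAt z)).card := (Finset.card_insert_of_notMem hep).symm
        _ ≤ _ := Finset.card_le_card (Finset.insert_subset he hsub)
    · exact (ih (List.nodup_cons.mp hp).2 hzp hzc hb).trans (Finset.card_le_card hsub)

end Walk

/-! ### Immersions -/

lemma exists_immersionData_of_owned_walks (f : H.V → G.V) (hf : Function.Injective f)
    (own : G.E → Option H.E)
    (hwalk : ∀ e, ∃ x y, s(x, y) = (H.ends e).map f ∧
      ∃ p : G.Walk x y, ∀ g ∈ p.edges, own g = some e) :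
    ∃ I : ImmersionData H G, I.vmap = f := by
  choose x y hxy p hp using hwalk
  choose q hq hqp using fun e => (p e).exists_isPath
  refine ⟨⟨f, hf, x, y, q, hxy, hq, fun e e' hne g hg hg' => hne ?_⟩, rfl⟩
  exact Option.some_injective _ ((hp e g (hqp e hg)).symm.trans (hp e' g (hqp e' hg')))

namespace ImmersionData

variable (I : ImmersionData H G)

noncomputable def owner (g : G.E) : Option H.E :=
  if h : ∃ e, g ∈ (I.walk e).edges then some h.choose else none

lemma owner_eq {g : G.E} {e : H.E} (hg : g ∈ (I.walk e).edges) : I.owner g = some e := by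
  have h : ∃ e, g ∈ (I.walk e).edges := ⟨e, hg⟩
  rw [owner, dif_pos h]
  by_contra hne
  exact I.edgeDisj _ _ (fun h' => hne (congrArg some h')) h.choose_spec hg

lemma eq_of_mem_edges {g : G.E} {e e' : H.E} (h : g ∈ (I.walk e).edges)
    (h' : g ∈ (I.walk e').edges) : e = e' :=
  Option.some_injective _ ((I.owner_eq h).symm.trans (I.owner_eq h'))

lemma exists_walk_from {e : H.E} {x : H.V} (hx : x ∈ H.ends e) :
    ∃ y, H.ends e = s(x, y) ∧
      ∃ p : G.Walk (I.vmap x) (I.vmap y), p.IsPath ∧ p.edges ⊆ (I.walk e).edges := by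
  obtain ⟨y, hy⟩ := Sym2.mem_iff_exists.mp hx
  refine ⟨y, hy, ?_⟩
  have hends := I.ends_eq e
  rw [hy, Sym2.map_mk, Sym2.eq_iff] at hends
  obtain ⟨q, hq⟩ : ∃ q : G.Walk (I.vmap x) (I.vmap y), q.edges ⊆ (I.walk e).edges := by
    rcases hends with ⟨h1, h2⟩ | ⟨h1, h2⟩
    · obtain ⟨q, hq⟩ := (I.walk e).exists_walk_of_eq h1 h2
      exact ⟨q, hq ▸ List.Subset.refl _⟩
    · obtain ⟨q, hq⟩ := (I.walk e).reverse.exists_walk_of_eq h2 h1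
      exact ⟨q, fun g hg => by simpa [hq] using hg⟩
  obtain ⟨p, hp, hpq⟩ := q.exists_isPath
  exact ⟨p, hp, List.Subset.trans hpq hq⟩

lemma one_le_card_edgesAt {e : H.E} {x : H.V} (hx : x ∈ H.ends e) :
    1 ≤ ((I.walk e).edgesAt (I.vmap x)).card := by
  obtain ⟨y, hy, p, -, hp⟩ := I.exists_walk_from hx
  have hxy : I.vmap x ≠ I.vmap y := fun h => H.ne_of_ends_eq hy (I.inj h)
  exact (p.one_le_card_edgesAt_start hxy).trans
    (Finset.card_le_card (Walk.edgesAt_mono hp _))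

lemma sum_card_edgesAt_le (F : Finset H.E) (z : G.V) :
    ∑ e ∈ F, ((I.walk e).edgesAt z).card ≤ G.deg z := by
  rw [← Finset.card_biUnion]
  · refine Finset.card_le_card fun g hg => ?_
    obtain ⟨e, -, hg⟩ := Finset.mem_biUnion.mp hg
    simp only [Walk.edgesAt, Finset.mem_filter] at hg
    simpa using hg.2
  · intro e _ e' _ hne
    refine Finset.disjoint_left.mpr fun g hg hg' => ?_
    simp only [Walk.edgesAt, Finset.mem_filter, List.mem_toFinset] at hg hg'
    exact hne (I.eq_of_mem_edges hg.1 hg'.1)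

/-- Counting edges at `z`: the three paths at `x` contribute one each, and a path through `z`
that does not end there contributes two. -/
lemma vmap_ne_of_mem_support {x : H.V} (hx : 3 ≤ H.deg x) {z : G.V} (hz : G.deg z ≤ 4)
    {e : H.E} (hze : z ∈ (I.walk e).support) (hzn : z ∉ (H.ends e).map I.vmap) :
    I.vmap x ≠ z := by
  rintro rfl
  have hend : I.vmap x ≠ I.pstart e ∧ I.vmap x ≠ I.pend e := by
    rw [← I.ends_eq e, Sym2.mem_iff, not_or] at hzn
    exact hzn
  have hxe : e ∉ Finset.univ.filter (x ∈ H.ends ·) := by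
    simpa using fun h => hzn (Sym2.mem_map.mpr ⟨x, h, rfl⟩)
  have hstar : H.deg x ≤ ∑ e' ∈ Finset.univ.filter (x ∈ H.ends ·),
      ((I.walk e').edgesAt (I.vmap x)).card := by
    rw [deg, Finset.card_eq_sum_ones]
    exact Finset.sum_le_sum fun e' he' => I.one_le_card_edgesAt (by simpa using he')
  have htwo := Walk.two_le_card_edgesAt (I.isPath e) hze hend.1 hend.2
  have hsum := I.sum_card_edgesAt_le (insert e (Finset.univ.filter (x ∈ H.ends ·))) (I.vmap x)
  rw [Finset.sum_insert hxe] at hsum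
  omega

/-- The paths at `b` other than `m` are restarted at `z` without `g`, and the path of `m` is
extended by `g`. -/
lemma exists_update_vmap {b : H.V} {z : G.V}
    (hz : ∀ x, I.vmap x ≠ z) {g : G.E} (hg : G.ends g = s(z, I.vmap b)) {k m : H.E}
    (hk : b ∈ H.ends k) (hgk : g ∈ (I.walk k).edges)
    (hR : ∀ e, b ∈ H.ends e → e ≠ m → ∃ c, H.ends e = s(b, c) ∧
      ∃ R : G.Walk z (I.vmap c), R.edges ⊆ (I.walk e).edges ∧ g ∉ R.edges) :
    ∃ I' : ImmersionData H G, I'.vmap = Function.update I.vmap b z := by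
  have hother : ∀ {c : H.V}, c ≠ b → Function.update I.vmap b z c = I.vmap c :=
    fun hc => Function.update_of_ne hc _ _
  refine exists_immersionData_of_owned_walks _ (I.inj.update_of_forall_ne b hz)
    (fun g' => if g' = g then some m else I.owner g') fun e => ?_
  by_cases hbe : b ∈ H.ends e
  · by_cases hem : e = m
    · subst hem
      obtain ⟨c, hc, p, -, hp⟩ := I.exists_walk_from hbe
      have hcb : c ≠ b := (H.ne_of_ends_eq hc).symm
      refine ⟨z, I.vmap c, by simp [hc, hother hcb], .cons g hg p, fun g' hg' => ?_⟩
      rcases List.mem_cons.mp hg' with rfl | hg'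
      · simp
      · split_ifs
        · rfl
        · exact I.owner_eq (hp hg')
    · obtain ⟨c, hc, R, hRe, hgR⟩ := hR e hbe hem
      have hcb : c ≠ b := (H.ne_of_ends_eq hc).symm
      refine ⟨z, I.vmap c, by simp [hc, hother hcb], R, fun g' hg' => ?_⟩
      rw [if_neg (fun h : g' = g => hgR (h ▸ hg')), I.owner_eq (hRe hg')]
  · refine ⟨I.pstart e, I.pend e, ?_, I.walk e, fun g' hg' => ?_⟩
    · rw [I.ends_eq e]
      exact Sym2.map_congr fun c hc => (hother fun h => hbe (h ▸ hc)).symm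
    · rw [if_neg, I.owner_eq hg']
      rintro rfl
      exact hbe (I.eq_of_mem_edges hg' hgk ▸ hk)

/-- Of two parallel-free paths at `b` through `z`, one does not end at `x`, so `z` is interior
to it. -/
lemma vmap_ne_of_mem_support_of_mem_support (hHs : Function.Injective H.ends) {x : H.V}
    (hx : 3 ≤ H.deg x) {z : G.V} (hz : G.deg z ≤ 4) {b : H.V} (hb : I.vmap b ≠ z)
    {k l : H.E} (hk : b ∈ H.ends k) (hl : b ∈ H.ends l) (hkl : k ≠ l)
    (hzk : z ∈ (I.walk k).support) (hzl : z ∈ (I.walk l).support) : I.vmap x ≠ z := by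
  intro hxz
  obtain ⟨c, hc⟩ := Sym2.mem_iff_exists.mp hk
  obtain ⟨c', hc'⟩ := Sym2.mem_iff_exists.mp hl
  have interior : ∀ {e : H.E} {c : H.V}, H.ends e = s(b, c) → c ≠ x →
      z ∉ (H.ends e).map I.vmap := fun he hcx hz => by
    rw [he, Sym2.map_mk, Sym2.mem_iff] at hz
    rcases hz with h | h
    · exact hb h.symm
    · exact hcx (I.inj (h ▸ hxz).symm)
  by_cases hcx : c = x
  · have hcx' : c' ≠ x := fun h => hkl (hHs (by rw [hc, hc', hcx, h]))
    exact I.vmap_ne_of_mem_support hx hz hzl (interior hc' hcx') hxz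
  · exact I.vmap_ne_of_mem_support hx hz hzk (interior hc hcx) hxz

end ImmersionData

/-! ### Cuts -/

lemma exists_mem_compl_mk_eq_iff {V : Type*} [Fintype V] [DecidableEq V] (A : Finset V)
    (a b : V) : (∃ x ∈ A, ∃ y ∈ Aᶜ, s(a, b) = s(x, y)) ↔ (a ∈ A ↔ b ∉ A) := by
  constructor
  · rintro ⟨x, hx, y, hy, h⟩
    rw [Finset.mem_compl] at hy
    rcases Sym2.eq_iff.mp h with ⟨rfl, rfl⟩ | ⟨rfl, rfl⟩ <;> tauto
  · intro h
    by_cases ha : a ∈ A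
    · exact ⟨a, ha, b, Finset.mem_compl.mpr (h.mp ha), rfl⟩
    · exact ⟨b, not_not.mp (mt h.mpr ha), a, Finset.mem_compl.mpr ha, Sym2.eq_swap⟩

lemma cut_compl (A : Finset G.V) : G.cut Aᶜ = G.cut A := by
  ext e
  simp only [cut, Finset.mem_filter, Finset.mem_univ, true_and]
  induction G.ends e using Sym2.ind with
  | _ a b =>
    rw [exists_mem_compl_mk_eq_iff, exists_mem_compl_mk_eq_iff, Finset.mem_compl,
      Finset.mem_compl]
    tauto

lemma card_cut_singleton (x : G.V) : (G.cut {x}).card = G.deg x := by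
  congr 1
  ext e
  simp only [cut, Finset.mem_filter, Finset.mem_univ, true_and]
  have hloop := G.noLoop e
  revert hloop
  induction G.ends e using Sym2.ind with
  | _ a b =>
    rw [exists_mem_compl_mk_eq_iff, Sym2.mem_iff, Sym2.mk_isDiag_iff]
    intro hloop
    simp only [Finset.mem_singleton]
    constructor
    · tauto
    · rintro (rfl | rfl) <;> simp [hloop, Ne.symm hloop]

lemma Internally4EC.four_le_card_cut (hG : G.Internally4EC) {A : Finset G.V} {x y : G.V}
    (hx : x ∈ A) (hy : y ∉ A) (hdx : 4 ≤ G.deg x) (hdy : 4 ≤ G.deg y) :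
    4 ≤ (G.cut A).card := by
  have hA : A ≠ Finset.univ := fun h => hy (h ▸ Finset.mem_univ y)
  have h3 := hG.1 A ⟨x, hx⟩ hA
  by_contra! h4
  rcases hG.2 A ⟨x, hx⟩ hA (by omega) with h1 | h1
  · obtain rfl : A = {x} := (Finset.card_eq_one.mp h1).elim fun a ha => by
      rw [ha] at hx ⊢; rw [Finset.mem_singleton.mp hx]
    rw [card_cut_singleton] at h4
    omega
  · have hAc : Aᶜ = {y} := (Finset.card_eq_one.mp h1).elim fun a ha => by
      have hy' : y ∈ Aᶜ := Finset.mem_compl.mpr hy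
      rw [ha] at hy' ⊢; rw [Finset.mem_singleton.mp hy']
    rw [← cut_compl, hAc, card_cut_singleton] at h4
    omega

/-! ### The pinched graph -/

attribute [reducible] pinch

/-- The old endpoint of a new edge of `G.pinch u v`. -/
def pinchEnd (u v : G.V) : Fin 2 ⊕ Fin 2 → G.V := Sum.elim (fun _ => u) (fun _ => v)

lemma pinch_ends_inl (e : {e : G.E // G.ends e ≠ s(u, v)}) :
    (G.pinch u v).ends (.inl e) = (G.ends e.1).map Sum.inl := rfl

lemma pinch_ends_inr (i : Fin 2 ⊕ Fin 2) :
    (G.pinch u v).ends (.inr i) = s(.inl (pinchEnd u v i), .inr ()) := by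
  cases i <;> rfl

lemma eq_of_pinch_ends_inr_eq_mk_inl {i : Fin 2 ⊕ Fin 2} {a : G.V} {c : (G.pinch u v).V}
    (h : (G.pinch u v).ends (.inr i) = s(.inl a, c)) : pinchEnd u v i = a ∧ c = .inr () := by
  rw [pinch_ends_inr, Sym2.eq_iff] at h
  rcases h with ⟨h1, h2⟩ | ⟨-, h2⟩
  · exact ⟨Sum.inl_injective h1, h2.symm⟩
  · exact nomatch h2

lemma eq_of_pinch_ends_inr_eq_mk_inr {i : Fin 2 ⊕ Fin 2} {c : (G.pinch u v).V}
    (h : (G.pinch u v).ends (.inr i) = s(.inr (), c)) : c = .inl (pinchEnd u v i) := by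
  rw [pinch_ends_inr, Sym2.eq_iff] at h
  rcases h with ⟨h1, -⟩ | ⟨h1, -⟩
  · exact nomatch h1
  · exact h1.symm

lemma pinchEnd_eq_or (i : Fin 2 ⊕ Fin 2) : pinchEnd u v i = u ∨ pinchEnd u v i = v := by
  rcases i with _ | _
  exacts [.inl rfl, .inr rfl]

lemma ne_of_mult_eq_two (hmult : G.mult u v = 2) : u ≠ v := by
  obtain ⟨e, he⟩ : (Finset.univ.filter fun e => G.ends e = s(u, v)).Nonempty :=
    Finset.card_pos.mp (by rw [← mult, hmult]; omega)
  exact G.ne_of_ends_eq (Finset.mem_filter.mp he).2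

lemma card_cut_eq (hmult : G.mult u v = 2) (A : Finset G.V) :
    (G.cut A).card = ((G.cut A).filter (G.ends · ≠ s(u, v))).card +
      if (u ∈ A ↔ v ∉ A) then 2 else 0 := by
  rw [← Finset.card_filter_add_card_filter_not (s := G.cut A) (p := (G.ends · = s(u, v))), add_comm]
  congr 1
  split_ifs with h
  · rw [← hmult, mult, cut, Finset.filter_filter]
    congr 1
    ext e
    simp only [Finset.mem_filter, Finset.mem_univ, true_and, and_iff_right_iff_imp]
    intro he
    rw [he, exists_mem_compl_mk_eq_iff]
    exact h
  · rw [Finset.card_eq_zero, Finset.filter_eq_empty_iff]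
    intro e he hend
    simp only [cut, Finset.mem_filter, Finset.mem_univ, true_and, hend,
      exists_mem_compl_mk_eq_iff] at he
    exact h he

lemma card_pinch_cut (A' : Finset (G.pinch u v).V) (hw : .inr () ∈ A') :
    ((G.pinch u v).cut A').card = ((G.cut A'.toLeft).filter (G.ends · ≠ s(u, v))).card +
      (if .inl u ∈ A' then 0 else 2) + (if .inl v ∈ A' then 0 else 2) := by
  have hinl : ∀ s : Sym2 G.V, (∃ x ∈ A', ∃ y ∈ A'ᶜ, s.map Sum.inl = s(x, y)) ↔
      ∃ x ∈ A'.toLeft, ∃ y ∈ A'.toLeftᶜ, s = s(x, y) := fun s => by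
    induction s using Sym2.ind with
    | _ a b =>
      rw [Sym2.map_mk, exists_mem_compl_mk_eq_iff, exists_mem_compl_mk_eq_iff, Finset.mem_toLeft,
        Finset.mem_toLeft]
  have hinr : ∀ y : G.V, (∃ x ∈ A', ∃ x' ∈ A'ᶜ, s(.inl y, .inr ()) = s(x, x')) ↔
      .inl y ∉ A' := fun y => by
    rw [exists_mem_compl_mk_eq_iff]
    tauto
  simp only [cut, Finset.card_filter, Fintype.sum_sum_type, hinl, hinr]
  rw [← Finset.sum_subtype (Finset.univ.filter (G.ends · ≠ s(u, v))) (by simp)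
    (fun e => if ∃ x ∈ A'.toLeft, ∃ y ∈ A'.toLeftᶜ, G.ends e = s(x, y) then 1 else 0),
    Finset.sum_filter, Finset.sum_filter]
  simp only [← ite_and, and_comm, Finset.sum_const, Finset.card_univ, Fintype.card_fin,
    smul_eq_mul]
  split_ifs <;> omega

lemma pinch_deg_inl (hmult : G.mult u v = 2) {y : G.V} (hy : y = u ∨ y = v) :
    (G.pinch u v).deg (.inl y) = G.deg y := by
  have huv := ne_of_mult_eq_two hmult
  rw [← card_cut_singleton, ← card_cut_singleton, ← cut_compl, ← cut_compl {y}]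
  have hleft : ({.inl y}ᶜ : Finset (G.pinch u v).V).toLeft = {y}ᶜ := by ext; simp
  rw [card_pinch_cut _ (by simp), card_cut_eq hmult, hleft]
  rcases hy with rfl | rfl <;> simp [huv, huv.symm]

lemma pinch_cut_of_mem (h4ec : G.Internally4EC) (hmult : G.mult u v = 2)
    (hdu : 4 ≤ G.deg u) (hdv : 4 ≤ G.deg v) {A' : Finset (G.pinch u v).V}
    (hw : .inr () ∈ A') (hA' : A' ≠ Finset.univ) :
    3 ≤ ((G.pinch u v).cut A').card ∧
      (((G.pinch u v).cut A').card = 3 → A'ᶜ.card = 1) := by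
  rw [card_pinch_cut _ hw]
  set A := A'.toLeft
  have hA : A ≠ Finset.univ := fun h => hA' <| Finset.eq_univ_of_forall fun
    | .inl a => Finset.mem_toLeft.mp (show a ∈ A from h ▸ Finset.mem_univ a)
    | .inr () => hw
  have hcompl : A'ᶜ.card = Aᶜ.card := by
    have hleft : A'ᶜ.toLeft = Aᶜ := by ext; simp [A]
    have hright : A'ᶜ.toRight = ∅ := by ext ⟨⟩; simp [hw]
    rw [← Finset.card_toLeft_add_card_toRight (u := A'ᶜ), hleft, hright, Finset.card_empty,
      add_zero]
  have hcut := card_cut_eq hmult A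
  have hu' : Sum.inl u ∈ A' ↔ u ∈ A := Finset.mem_toLeft.symm
  have hv' : Sum.inl v ∈ A' ↔ v ∈ A := Finset.mem_toLeft.symm
  by_cases hu : u ∈ A <;> by_cases hv : v ∈ A <;>
    simp only [hu', hv', hu, hv, if_true, if_false, iff_true, iff_false, not_true,
      not_false_eq_true] at hcut ⊢
  · have h3 := h4ec.1 A ⟨u, hu⟩ hA
    refine ⟨by omega, fun h => ?_⟩
    rcases h4ec.2 A ⟨u, hu⟩ hA (by omega) with h1 | h1
    · exact absurd (Finset.one_lt_card.mpr ⟨u, hu, v, hv, ne_of_mult_eq_two hmult⟩) (by omega)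
    · omega
  · have := h4ec.four_le_card_cut hu hv hdu hdv
    omega
  · have := h4ec.four_le_card_cut hv hu hdv hdu
    omega
  · omega

theorem Internally4EC.pinch (h4ec : G.Internally4EC) (hmult : G.mult u v = 2)
    (hdu : 4 ≤ G.deg u) (hdv : 4 ≤ G.deg v) : (G.pinch u v).Internally4EC := by
  have key : ∀ A' : Finset (G.pinch u v).V, A'.Nonempty → A' ≠ Finset.univ →
      3 ≤ ((G.pinch u v).cut A').card ∧
        (((G.pinch u v).cut A').card = 3 → A'.card = 1 ∨ A'ᶜ.card = 1) := by
    intro A' hne hA'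
    by_cases hw : .inr () ∈ A'
    · exact (pinch_cut_of_mem h4ec hmult hdu hdv hw hA').imp_right fun h h3 => .inr (h h3)
    · have hAc : A'ᶜ ≠ Finset.univ := fun h => hne.ne_empty ((Finset.compl_eq_univ_iff _).mp h)
      obtain ⟨h3, h1⟩ := pinch_cut_of_mem h4ec hmult hdu hdv (Finset.mem_compl.mpr hw) hAc
      rw [cut_compl] at h3 h1
      rw [compl_compl] at h1
      exact ⟨h3, fun h => .inl (h1 h)⟩
  exact ⟨fun A' hne hA' => (key A' hne hA').1, fun A' hne hA' => (key A' hne hA').2⟩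

/-! ### Immersions in the pinched graph -/

/-- The two edges between `u` and `v` stand in for the two new edges at `u`. -/
lemma exists_pinch_lift (hmult : G.mult u v = 2) :
    ∃ lift : G.E → (G.pinch u v).E, (∀ g (hg : G.ends g ≠ s(u, v)), lift g = .inl ⟨g, hg⟩) ∧
      ∀ t, ∃ g, G.ends g = s(u, v) ∧ lift g = .inr (.inl t) := by
  have hcard : Fintype.card {g // G.ends g = s(u, v)} = 2 := by
    rw [Fintype.card_subtype]; exact hmult
  let σ := Fintype.equivFinOfCardEq hcard
  refine ⟨fun g => if hg : G.ends g = s(u, v) then .inr (.inl (σ ⟨g, hg⟩)) else .inl ⟨g, hg⟩,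
    fun g hg => dif_neg hg, fun t => ⟨(σ.symm t).1, (σ.symm t).2, ?_⟩⟩
  simp [dif_pos (σ.symm t).2]

lemma exists_pinch_bridge {lift : G.E → (G.pinch u v).E}
    (hlift : ∀ t, ∃ g, G.ends g = s(u, v) ∧ lift g = .inr (.inl t)) (i i' : Fin 2 ⊕ Fin 2) :
    ∃ q : G.Walk (pinchEnd u v i) (pinchEnd u v i'),
      ∀ g ∈ q.edges, lift g = .inr i ∨ lift g = .inr i' := by
  rcases i with t | t <;> rcases i' with t' | t'
  · exact ⟨.nil u, fun _ => List.not_mem_nil.elim⟩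
  · obtain ⟨g, hg, hgt⟩ := hlift t
    exact ⟨.cons g hg (.nil v), fun g' hg' => .inl (List.mem_singleton.mp hg' ▸ hgt)⟩
  · obtain ⟨g, hg, hgt⟩ := hlift t'
    exact ⟨.cons g (hg.trans Sym2.eq_swap) (.nil u),
      fun g' hg' => .inr (List.mem_singleton.mp hg' ▸ hgt)⟩
  · exact ⟨.nil v, fun _ => List.not_mem_nil.elim⟩

/-- Projecting a walk of `G.pinch u v` to `G`: a passage `u, w, v` through the new vertex `w`
becomes an edge between `u` and `v`, and a passage `u, w, u` is skipped. -/
lemma exists_walk_of_pinch_walk {lift : G.E → (G.pinch u v).E}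
    (hold : ∀ g (hg : G.ends g ≠ s(u, v)), lift g = .inl ⟨g, hg⟩)
    (hnew : ∀ t, ∃ g, G.ends g = s(u, v) ∧ lift g = .inr (.inl t))
    {a' b' : (G.pinch u v).V} (p : (G.pinch u v).Walk a' b') {b : G.V} (hb : b' = .inl b) :
    (∀ a, a' = .inl a → ∃ q : G.Walk a b, ∀ g ∈ q.edges, lift g ∈ p.edges) ∧
      (a' = .inr () → ∀ i, ∃ q : G.Walk (pinchEnd u v i) b,
        ∀ g ∈ q.edges, lift g = .inr i ∨ lift g ∈ p.edges) := by
  induction p with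
  | nil c =>
    subst hb
    refine ⟨fun a ha => ?_, fun h => nomatch h⟩
    obtain rfl := Sum.inl_injective ha
    exact ⟨.nil b, by simp⟩
  | @cons a'' c b' e h p ih =>
    obtain ⟨ih1, ih2⟩ := ih hb
    rcases e with f | i'
    · rw [pinch_ends_inl] at h
      refine ⟨fun a ha => ?_, fun hw => absurd (hw ▸ h ▸ Sym2.mem_mk_left _ _)
        (Sym2.inr_notMem_map_inl _ _)⟩
      subst ha
      obtain ⟨c', rfl, hf⟩ := Sym2.exists_eq_inl_of_map_inl_eq h
      obtain ⟨q, hq⟩ := ih1 c' rfl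
      refine ⟨.cons f.1 hf q, fun g hg => ?_⟩
      rcases List.mem_cons.mp hg with rfl | hg
      · simp [hold _ f.2]
      · exact List.mem_cons_of_mem _ (hq g hg)
    · refine ⟨fun a ha => ?_, fun ha i => ?_⟩
      · subst ha
        obtain ⟨ha, rfl⟩ := eq_of_pinch_ends_inr_eq_mk_inl h
        obtain ⟨q, hq⟩ := ih2 rfl i'
        refine ⟨ha ▸ q, fun g hg => ?_⟩
        rcases hq g (by subst ha; exact hg) with hg | hg
        · simp [hg]
        · exact List.mem_cons_of_mem _ hg
      · subst ha
        obtain rfl := eq_of_pinch_ends_inr_eq_mk_inr h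
        obtain ⟨r, hr⟩ := exists_pinch_bridge hnew i i'
        obtain ⟨q, hq⟩ := ih1 _ rfl
        refine ⟨r.append q, fun g hg => ?_⟩
        rcases List.mem_append.mp (Walk.edges_append r q ▸ hg) with hg | hg
        · rcases hr g hg with hg | hg
          · exact .inl hg
          · simp [hg]
        · exact .inr (List.mem_cons_of_mem _ (hq g hg))

theorem ImmersionData.immerses_of_pinch (hmult : G.mult u v = 2)
    (I : ImmersionData H (G.pinch u v)) (hI : ∀ x, I.vmap x ≠ .inr ()) : Immerses H G := by
  obtain ⟨lift, hold, hnew⟩ := exists_pinch_lift hmult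
  have hleft : ∀ x, ∃ y, I.vmap x = .inl y := fun x => by
    rcases hx : I.vmap x with y | ⟨⟩
    exacts [⟨y, rfl⟩, absurd hx (hI x)]
  choose f hf using hleft
  have hmap : ∀ e, (H.ends e).map I.vmap = ((H.ends e).map f).map Sum.inl := fun e => by
    rw [Sym2.map_map]; exact Sym2.map_congr fun x _ => hf x
  have hfinj : Function.Injective f := fun x x' h => I.inj (by rw [hf, hf, h])
  obtain ⟨I', -⟩ := exists_immersionData_of_owned_walks f hfinj (I.owner ∘ lift) fun e => by
    have hends : ∀ y ∈ s(I.pstart e, I.pend e), ∃ a, y = .inl a := fun y hy => by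
      rw [I.ends_eq, hmap] at hy
      obtain ⟨a, -, rfl⟩ := Sym2.mem_map.mp hy
      exact ⟨a, rfl⟩
    obtain ⟨a, ha⟩ := hends _ (Sym2.mem_mk_left _ _)
    obtain ⟨b, hb⟩ := hends _ (Sym2.mem_mk_right _ _)
    obtain ⟨q, hq⟩ := (exists_walk_of_pinch_walk hold hnew (I.walk e) hb).1 a ha
    refine ⟨a, b, Sym2.map.injective (Sum.inl_injective (β := Unit)) ?_, q,
      fun g hg => I.owner_eq (hq g hg)⟩
    rw [Sym2.map_mk, ← ha, ← hb, I.ends_eq, hmap]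
  exact ⟨I'⟩

lemma exists_pinch_exit {a' t : (G.pinch u v).V} (p : (G.pinch u v).Walk a' t) (hp : p.IsPath)
    (ha : a' = .inr ()) (ht : t ≠ .inr ()) :
    ∃ i, .inr i ∈ p.edges ∧ ∃ R : (G.pinch u v).Walk (.inl (pinchEnd u v i)) t,
      R.edges ⊆ p.edges ∧ .inr i ∉ R.edges := by
  cases p with
  | nil => exact absurd ha ht
  | @cons _ c _ e h R =>
    subst ha
    rcases e with f | i
    · exact absurd (h ▸ Sym2.mem_mk_left _ _) (Sym2.inr_notMem_map_inl _ _)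
    · obtain rfl := eq_of_pinch_ends_inr_eq_mk_inr h
      exact ⟨i, List.mem_cons_self, R, List.subset_cons_self _ _, hp.notMem_edges_of_cons⟩

lemma ImmersionData.exists_exit (I : ImmersionData H (G.pinch u v)) {b : H.V}
    (hb : I.vmap b = .inr ()) {e : H.E} (he : b ∈ H.ends e) :
    ∃ i, .inr i ∈ (I.walk e).edges ∧ ∃ c, H.ends e = s(b, c) ∧
      ∃ R : (G.pinch u v).Walk (.inl (pinchEnd u v i)) (I.vmap c),
        R.edges ⊆ (I.walk e).edges ∧ .inr i ∉ R.edges := by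
  obtain ⟨c, hc, p, hp, hpe⟩ := I.exists_walk_from he
  have hcb : c ≠ b := (H.ne_of_ends_eq hc).symm
  obtain ⟨i, hi, R, hR, hiR⟩ := exists_pinch_exit p hp hb (hb ▸ fun h => hcb (I.inj h))
  exact ⟨i, hpe hi, c, hc, R, List.Subset.trans hR hpe, hiR⟩

theorem ImmersionData.exists_vmap_ne_inr (hH : H.IsRegular 3) (hHs : Function.Injective H.ends)
    (hmult : G.mult u v = 2) (hdu : G.deg u ≤ 4) (hdv : G.deg v ≤ 4)
    (I : ImmersionData H (G.pinch u v)) :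
    ∃ I' : ImmersionData H (G.pinch u v), ∀ x, I'.vmap x ≠ .inr () := by
  by_cases hb : ∃ b, I.vmap b = .inr ()
  swap
  · exact ⟨I, fun x hx => hb ⟨x, hx⟩⟩
  obtain ⟨b, hb⟩ := hb
  choose! j hj using fun e (he : b ∈ H.ends e) => I.exists_exit hb he
  obtain ⟨m, -, k, hk, l, hl, hkl, hside, hrest⟩ :=
    Finset.exists_eq_of_card_eq_three (s := Finset.univ.filter (b ∈ H.ends ·)) (hH b)
      (Finset.card_le_two (a := u) (b := v)) (f := fun e => pinchEnd u v (j e))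
      fun e _ => by simpa using pinchEnd_eq_or (j e)
  simp only [Finset.mem_filter, Finset.mem_univ, true_and] at hk hl hrest
  have hzdeg : (G.pinch u v).deg (.inl (pinchEnd u v (j k))) ≤ 4 := by
    rw [pinch_deg_inl hmult (pinchEnd_eq_or _)]
    rcases pinchEnd_eq_or (u := u) (v := v) (j k) with h | h <;> rw [h] <;> assumption
  have hsupp : ∀ e, b ∈ H.ends e → .inl (pinchEnd u v (j e)) ∈ (I.walk e).support :=
    fun e he => Walk.mem_support_of_mem_edges (hj e he).1
      (by rw [pinch_ends_inr]; exact Sym2.mem_mk_left _ _)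
  have hz : ∀ x, I.vmap x ≠ .inl (pinchEnd u v (j k)) := fun x =>
    I.vmap_ne_of_mem_support_of_mem_support hHs (hH x).ge hzdeg (by rw [hb]; exact nofun)
      hk hl hkl (hsupp k hk) (hside ▸ hsupp l hl)
  obtain ⟨I', hI'⟩ := I.exists_update_vmap hz (g := .inr (j k)) (m := m)
    (by rw [pinch_ends_inr, hb]) hk (hj k hk).1 fun e he hem => by
      obtain ⟨-, c, hc, R, hRe, hjR⟩ := hj e he
      refine ⟨c, hc, hrest e he hem ▸ ⟨R, hRe, fun hkR => ?_⟩⟩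
      obtain rfl := I.eq_of_mem_edges (hRe hkR) (hj k hk).1
      exact hjR hkR
  refine ⟨I', fun x => ?_⟩
  rw [hI']
  by_cases hx : x = b
  · rw [hx, Function.update_self]; exact nofun
  · rw [Function.update_of_ne hx, ← hb]; exact fun h => hx (I.inj h)

theorem Immerses.of_pinch (hH : H.IsRegular 3) (hHs : Function.Injective H.ends)
    (hmult : G.mult u v = 2) (hdu : G.deg u ≤ 4) (hdv : G.deg v ≤ 4)
    (h : Immerses H (G.pinch u v)) : Immerses H G := by
  obtain ⟨I⟩ := h
  obtain ⟨I', hI'⟩ := I.exists_vmap_ne_inr hH hHs hmult hdu hdv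
  exact I'.immerses_of_pinch hmult hI'

lemma K33_isRegular : K33.IsRegular 3 := by
  unfold IsRegular
  decide

lemma K33_ends_injective : Function.Injective K33.ends := by
  rintro ⟨a, b⟩ ⟨a', b'⟩ h
  simpa [K33, Sym2.eq_iff] using h

end Multigraph

open Multigraph in
/-- If `G` is internally 4-edge-connected with no `K_{3,3}` immersion and has
exactly two parallel edges between vertices `u`, `v`, both of degree four,
then the graph obtained by pinching this double edge is internally
4-edge-connected and has no `K_{3,3}` immersion. -/
theorem pinch_preserves (G : Multigraph) (u v : G.V)
    (h4ec : G.Internally4EC) (hno : ¬ Immerses K33 G)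
    (hmult : G.mult u v = 2) (hdu : G.deg u = 4) (hdv : G.deg v = 4) :
    (G.pinch u v).Internally4EC ∧ ¬ Immerses K33 (G.pinch u v) :=
  ⟨h4ec.pinch hmult hdu.ge hdv.ge,
    fun h => hno (h.of_pinch K33_isRegular K33_ends_injective hmult hdu.le hdv.le)⟩
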